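/- In the symmetric two-type Richardson model on ℤ^d (d ≥ 2, both infections at rate 1) started from ξ₁ = {0} and ξ₂ = {e₁}, each of the two strangulation outcomes has positive probability: P(G₁ ∩ G₂ᶜ) > 0 and P(G₂ ∩ G₁ᶜ) > 0, i.e., with positive probability type 1 infects infinitely many sites while type 2 infects only finitely many, and vice versa. -/

import Mathlib

open MeasureTheory ProbabilityTheory Filter
open scoped Classical Pointwise

/-- Nearest-neighbour adjacency on `ℤ^d`: Euclidean (equivalently `ℓ¹`) distance one. -/
def Adj {d : ℕ} (x y : Fin d → ℤ) : Prop := (∑ i, |x i - y i|) = 1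

/-- The set of nearest-neighbour edges of `ℤ^d`, as unordered pairs of adjacent vertices. -/
def Edge (d : ℕ) : Type := {e : Sym2 (Fin d → ℤ) // ∃ x y, Adj x y ∧ e = s(x, y)}

/-- The passage time attached to the edge `{x, y}` (junk value `0` if `x,y` not adjacent). -/
noncomputable def edgeTime {d : ℕ} (ω : Edge d → ℝ) (x y : Fin d → ℤ) : ℝ :=
  if h : Adj x y then ω ⟨s(x, y), x, y, h, rfl⟩ else 0

/-- The total passage time along a path, recorded as its list of visited vertices. -/
noncomputable def pathTime {d : ℕ} (ω : Edge d → ℝ) : List (Fin d → ℤ) → ℝ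
  | [] => 0
  | [_] => 0
  | x :: y :: γ => edgeTime ω x y + pathTime ω (y :: γ)

/-- `IsPath x y γ` : `γ` is a finite nearest-neighbour path from `x` to `y` in `ℤ^d`. -/
def IsPath {d : ℕ} (x y : Fin d → ℤ) (γ : List (Fin d → ℤ)) : Prop :=
  γ.head? = some x ∧ γ.getLast? = some y ∧ γ.Chain' Adj

/-- The first-passage time `T(x,y)`: infimum over all paths from `x` to `y` of the
sum of the passage times of the traversed edges. -/
noncomputable def T {d : ℕ} (ω : Edge d → ℝ) (x y : Fin d → ℤ) : ℝ :=
  sInf {t | ∃ γ, IsPath x y γ ∧ t = pathTime ω γ}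

/-- The passage time `T(S,x)` from a set `S` of vertices to the vertex `x`. -/
noncomputable def TS {d : ℕ} (ω : Edge d → ℝ) (S : Set (Fin d → ℤ)) (x : Fin d → ℤ) : ℝ :=
  sInf {t | ∃ y ∈ S, t = T ω y x}

/-- `IIDExp lam P` : under `P`, the edge passage times `ω ↦ ω e`, `e ∈ E_d`, are independent,
each exponentially distributed with rate `lam`, i.e. `P(ω e > t) = exp (- lam * t)`. -/
def IIDExp {d : ℕ} (lam : ℝ) (P : Measure (Edge d → ℝ)) : Prop :=
  iIndepFun (fun (e : Edge d) (ω : Edge d → ℝ) => ω e) P ∧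
  ∀ (e : Edge d) (t : ℝ), 0 ≤ t → P {ω | ω e > t} = ENNReal.ofReal (Real.exp (-(lam * t)))

/-- The origin of `ℤ^d`. -/
def origin (d : ℕ) : Fin d → ℤ := fun _ => 0

/-- The first standard basis vector `e₁ = (1,0,…,0)` of `ℤ^d`. -/
def e1 (d : ℕ) : Fin d → ℤ := fun i => if (i : ℕ) = 0 then 1 else 0

/-- The event that, in the symmetric two-type Richardson model started from `(ξa, ξb)`,
infinitely many vertices are eventually infected by the type carried by `ξa`. -/
def Gevent {d : ℕ} (ξa ξb : Set (Fin d → ℤ)) : Set (Edge d → ℝ) :=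
  {ω | {x | TS ω ξa x < TS ω ξb x}.Infinite}

/-!
Trap the seed `b`: make every edge at `b` slower than `K`, and every edge on fixed paths from `a`
to the neighbours of `b` that avoid `b` (they exist since `d ≥ 2`) faster than `1`, with `K`
exceeding the lengths of these paths. Only finitely many independent exponential times are
involved, so this has positive probability. On this event every path from `b` to `x ≠ b` starts
with an edge `{b, y}` slower than the route from `a` to `y`, hence `T(a, x) < T(b, x)`: type `a`
infects every vertex except `b`.
-/

section Lattice

variable {d : ℕ} {x y : Fin d → ℤ}

theorem Adj.symm (h : Adj x y) : Adj y x := by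
  unfold Adj at *
  simpa only [abs_sub_comm] using h

theorem Adj.ne (h : Adj x y) : x ≠ y := by
  rintro rfl
  simp [Adj] at h

theorem adj_update_add (u : Fin d → ℤ) (j : Fin d) {s : ℤ} (hs : |s| = 1) :
    Adj u (Function.update u j (u j + s)) := by
  unfold Adj
  rw [Finset.sum_eq_single j (fun i _ hij => by simp [hij]) (by simp)]
  simpa using hs

theorem Adj.abs_sub_le_one (h : Adj x y) (i : Fin d) : |x i - y i| ≤ 1 :=
  h ▸ Finset.single_le_sum (fun i _ => abs_nonneg (x i - y i)) (Finset.mem_univ i)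

theorem finite_setOf_adj (x : Fin d → ℤ) : {y | Adj x y}.Finite := by
  refine (Set.Finite.pi fun i => Set.finite_Icc (x i - 1) (x i + 1)).subset fun y hy => ?_
  simp only [Set.mem_pi, Set.mem_univ, Set.mem_Icc, true_implies]
  intro i
  have := (abs_le.1 ((hy : Adj x y).abs_sub_le_one i))
  constructor <;> linarith

end Lattice

section Paths

variable {d : ℕ} {x y z : Fin d → ℤ} {γ : List (Fin d → ℤ)}

theorem isPath_singleton (x : Fin d → ℤ) : IsPath x x [x] :=
  ⟨rfl, rfl, List.isChain_singleton x⟩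

theorem IsPath.mem_last (h : IsPath x y γ) : y ∈ γ :=
  List.mem_of_getLast? h.2.1

theorem IsPath.eq_cons (h : IsPath x y γ) : ∃ t, γ = x :: t := by
  obtain ⟨hhead, -, -⟩ := h
  rcases γ with _ | ⟨x', t⟩
  · simp at hhead
  · exact ⟨t, by simpa using hhead⟩

theorem IsPath.cons (h : IsPath y z γ) (hxy : Adj x y) : IsPath x z (x :: γ) := by
  obtain ⟨t, rfl⟩ := h.eq_cons
  exact ⟨rfl, by simpa using h.2.1, List.isChain_cons_cons.2 ⟨hxy, h.2.2⟩⟩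

theorem IsPath.eq_cons_cons_of_ne (h : IsPath x z γ) (hzx : z ≠ x) :
    ∃ y t, γ = x :: y :: t ∧ Adj x y ∧ IsPath y z (y :: t) := by
  obtain ⟨_ | ⟨y, t⟩, rfl⟩ := h.eq_cons
  · exact absurd (by simpa using h.2.1.symm) hzx
  · exact ⟨y, t, rfl, (List.isChain_cons_cons.1 h.2.2).1, rfl, by simpa using h.2.1,
      (List.isChain_cons_cons.1 h.2.2).2⟩

theorem IsPath.append {γ₁ γ₂ : List (Fin d → ℤ)} (h₁ : IsPath x y γ₁) (h₂ : IsPath y z (y :: γ₂)) :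
    IsPath x z (γ₁ ++ γ₂) := by
  obtain ⟨t, rfl⟩ := h₁.eq_cons
  refine ⟨rfl, ?_, List.isChain_append.2 ⟨h₁.2.2, h₂.2.2.tail, ?_⟩⟩
  · rcases γ₂ with _ | ⟨w, γ₂⟩
    · simpa [← h₂.2.1] using h₁.2.1
    · rw [List.getLast?_append_cons, ← h₂.2.1, List.getLast?_cons_cons]
  · rw [h₁.2.1]
    rintro _ hy w hw
    obtain rfl : y = _ := Option.some_inj.1 hy
    rcases γ₂ with _ | ⟨w', γ₂⟩
    · simp at hw
    · obtain rfl : w' = w := by simpa using hw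
      exact (List.isChain_cons_cons.1 h₂.2.2).1

theorem IsPath.reverse (h : IsPath x y γ) : IsPath y x γ.reverse :=
  ⟨by rw [List.head?_reverse]; exact h.2.1, by rw [List.getLast?_reverse]; exact h.1,
    List.isChain_reverse.2 (h.2.2.imp fun _ _ hab => hab.symm)⟩

end Paths

section Connectivity

variable {d : ℕ}

theorem exists_adj_step_toward {u v : Fin d → ℤ} {j : Fin d} (hj : u j ≠ v j) :
    ∃ u', Adj u u' ∧ ∑ i, |u' i - v i| = ∑ i, |u i - v i| - 1 ∧
      ∀ i, u' i ∈ Set.uIcc (u i) (v i) := by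
  set s : ℤ := if u j < v j then 1 else -1 with hs
  refine ⟨Function.update u j (u j + s), adj_update_add u j (by rw [hs]; split_ifs <;> simp),
    ?_, fun i => ?_⟩
  · have hsplit (w : Fin d → ℤ) : ∑ i, |w i - v i| =
        |w j - v j| + ∑ i ∈ Finset.univ.erase j, |w i - v i| :=
      (Finset.add_sum_erase _ _ (Finset.mem_univ j)).symm
    rw [hsplit, hsplit u, Finset.sum_congr rfl fun i hi => by
      rw [Function.update_of_ne (Finset.ne_of_mem_erase hi)], Function.update_self, hs]
    split_ifs <;> grind
  · rcases eq_or_ne i j with rfl | hij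
    · simp only [Function.update_self, Set.mem_uIcc, hs]
      split_ifs <;> omega
    · simp [Function.update_of_ne hij]

theorem exists_isPath_mem_uIcc (u v : Fin d → ℤ) :
    ∃ γ, IsPath u v γ ∧ ∀ w ∈ γ, ∀ i, w i ∈ Set.uIcc (u i) (v i) := by
  suffices ∀ n : ℕ, ∀ u : Fin d → ℤ, ∑ i, |u i - v i| = n →
      ∃ γ, IsPath u v γ ∧ ∀ w ∈ γ, ∀ i, w i ∈ Set.uIcc (u i) (v i) from
    this _ u (Int.toNat_of_nonneg (Finset.sum_nonneg fun i _ => abs_nonneg (u i - v i))).symm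
  intro n
  induction n with
  | zero =>
    intro u hu
    obtain rfl : u = v := funext fun i => sub_eq_zero.1 <| abs_eq_zero.1 <|
      (Finset.sum_eq_zero_iff_of_nonneg fun i _ => abs_nonneg (u i - v i)).1 hu i
        (Finset.mem_univ i)
    exact ⟨[u], isPath_singleton u, by simp⟩
  | succ n ih =>
    intro u hu
    obtain ⟨j, hj⟩ : ∃ j, u j ≠ v j := by
      by_contra! h
      simp only [h, sub_self, abs_zero, Finset.sum_const_zero] at hu
      omega
    obtain ⟨u', hadj, hdist, hu'⟩ := exists_adj_step_toward hj
    obtain ⟨γ, hγ, hbox⟩ := ih u' (by rw [hdist, hu]; push_cast; ring)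
    refine ⟨u :: γ, hγ.cons hadj, ?_⟩
    rintro w (_ | ⟨_, hw⟩) i
    · exact Set.left_mem_uIcc
    · exact Set.uIcc_subset_uIcc (hu' i) Set.right_mem_uIcc (hbox w hw i)

def JoinedAvoiding (b x y : Fin d → ℤ) : Prop :=
  ∃ γ, IsPath x y γ ∧ b ∉ γ

namespace JoinedAvoiding

variable {b x y z : Fin d → ℤ}

theorem symm (h : JoinedAvoiding b x y) : JoinedAvoiding b y x :=
  let ⟨γ, hγ, hb⟩ := h
  ⟨γ.reverse, hγ.reverse, by simpa using hb⟩

theorem trans (h₁ : JoinedAvoiding b x y) (h₂ : JoinedAvoiding b y z) : JoinedAvoiding b x z := by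
  obtain ⟨γ₁, hγ₁, hb₁⟩ := h₁
  obtain ⟨γ₂, hγ₂, hb₂⟩ := h₂
  obtain ⟨t, rfl⟩ := hγ₂.eq_cons
  exact ⟨γ₁ ++ t, hγ₁.append hγ₂, by simp_all⟩

theorem of_notMem_uIcc {i : Fin d} (hb : b i ∉ Set.uIcc (x i) (y i)) : JoinedAvoiding b x y :=
  let ⟨γ, hγ, hbox⟩ := exists_isPath_mem_uIcc x y
  ⟨γ, hγ, fun hbγ => hb (hbox b hbγ i)⟩

theorem of_eq_apply {i : Fin d} (hxy : x i = y i) (hxb : x i ≠ b i) : JoinedAvoiding b x y :=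
  of_notMem_uIcc (i := i) (by rw [← hxy, Set.uIcc_self]; exact hxb.symm)

theorem exists_apply_ne (hx : x ≠ b) (j : Fin d) : ∃ x', JoinedAvoiding b x x' ∧ x' j ≠ b j := by
  by_cases hxj : x j = b j
  · set x' := Function.update x j (x j + 1)
    refine ⟨x', ⟨[x, x'], (isPath_singleton x').cons (adj_update_add x j (by simp)), ?_⟩, ?_⟩
    · have : b ≠ x' := fun h => by
        have := congrFun h j
        simp only [x', Function.update_self] at this
        omega
      simp [this, hx.symm]
    · simp [x', hxj]
  · exact ⟨x, ⟨[x], isPath_singleton x, by simpa using hx.symm⟩, hxj⟩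

end JoinedAvoiding

theorem joinedAvoiding_of_ne (hd : 2 ≤ d) {b x y : Fin d → ℤ} (hx : x ≠ b) (hy : y ≠ b) :
    JoinedAvoiding b x y := by
  have : Nontrivial (Fin d) := Fin.nontrivial_iff_two_le.2 hd
  obtain ⟨j₀, j₁, hj⟩ := exists_pair_ne (Fin d)
  -- Leave the hyperplane `w j₀ = b j₀`, then pass `b` at height `b j₁ + 1` in direction `j₁`.
  obtain ⟨x', hxx', hx'⟩ := JoinedAvoiding.exists_apply_ne hx j₀
  obtain ⟨y', hyy', hy'⟩ := JoinedAvoiding.exists_apply_ne hy j₀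
  have raise {z : Fin d → ℤ} (hz : z j₀ ≠ b j₀) :
      JoinedAvoiding b z (Function.update z j₁ (b j₁ + 1)) :=
    .of_eq_apply (by simp [Function.update_of_ne hj]) hz
  have hlevel : JoinedAvoiding b (Function.update x' j₁ (b j₁ + 1))
      (Function.update y' j₁ (b j₁ + 1)) :=
    .of_eq_apply (i := j₁) (by simp) (by simp)
  exact ((hxx'.trans (raise hx')).trans hlevel).trans ((raise hy').symm.trans hyy'.symm)

end Connectivity

section PassageTime

variable {d : ℕ} {ω : Edge d → ℝ} {a b x y : Fin d → ℤ} {γ : List (Fin d → ℤ)}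

theorem pathTime_nonneg (hω : ∀ e, 0 ≤ ω e) : ∀ γ, 0 ≤ pathTime ω γ
  | [] | [_] => le_rfl
  | x :: y :: γ => by
    have : 0 ≤ edgeTime ω x y := by unfold edgeTime; split_ifs; exacts [hω _, le_rfl]
    exact add_nonneg this (pathTime_nonneg hω (y :: γ))

theorem pathTime_append (ω : Edge d → ℝ) (t : List (Fin d → ℤ)) :
    ∀ γ : List (Fin d → ℤ), γ.getLast? = some y →
      pathTime ω (γ ++ t) = pathTime ω γ + pathTime ω (y :: t)
  | [], h => by simp at h
  | [_], h => by
    obtain rfl : _ = y := by simpa using h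
    simp [pathTime]
  | x :: x' :: γ, h => by
    rw [List.getLast?_cons_cons] at h
    simp only [List.cons_append, pathTime]
    rw [← List.cons_append, pathTime_append ω t (x' :: γ) h, add_assoc]

theorem pathTime_le_length (h : ∀ u ∈ γ, ∀ v ∈ γ, edgeTime ω u v ≤ 1) :
    pathTime ω γ ≤ γ.length := by
  induction γ with
  | nil => simp [pathTime]
  | cons x γ ih =>
    rcases γ with _ | ⟨y, γ⟩
    · simp [pathTime]
    · have := ih fun u hu v hv => h u (.tail _ hu) v (.tail _ hv)
      have := h x (by simp) y (by simp)
      simp only [pathTime, List.length_cons, Nat.cast_add, Nat.cast_one] at *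
      linarith

theorem T_le_pathTime (hω : ∀ e, 0 ≤ ω e) (h : IsPath x y γ) : T ω x y ≤ pathTime ω γ :=
  csInf_le ⟨0, by rintro _ ⟨γ, -, rfl⟩; exact pathTime_nonneg hω γ⟩ ⟨γ, h, rfl⟩

theorem le_T {c : ℝ} (h : ∀ γ, IsPath x y γ → c ≤ pathTime ω γ) : c ≤ T ω x y := by
  obtain ⟨γ, hγ, -⟩ := exists_isPath_mem_uIcc x y
  exact le_csInf ⟨_, γ, hγ, rfl⟩ (by rintro _ ⟨γ, hγ, rfl⟩; exact h γ hγ)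

theorem TS_singleton (ω : Edge d → ℝ) (a x : Fin d → ℤ) : TS ω {a} x = T ω a x := by
  simp [TS]

theorem T_add_le_T_of_forall_adj (hω : ∀ e, 0 ≤ ω e) {c : ℝ}
    (htrap : ∀ y, Adj b y → ∃ γ, IsPath a y γ ∧ pathTime ω γ + c ≤ edgeTime ω b y)
    (hx : x ≠ b) : T ω a x + c ≤ T ω b x := by
  refine le_T fun γ hγ => ?_
  obtain ⟨y, t, rfl, hby, ht⟩ := hγ.eq_cons_cons_of_ne hx
  obtain ⟨γ', hγ', hle⟩ := htrap y hby
  calc T ω a x + c ≤ pathTime ω (γ' ++ t) + c := by gcongr; exact T_le_pathTime hω (hγ'.append ht)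
    _ = pathTime ω γ' + c + pathTime ω (y :: t) := by rw [pathTime_append ω t γ' hγ'.2.1]; ring
    _ ≤ edgeTime ω b y + pathTime ω (y :: t) := by gcongr
    _ = pathTime ω (b :: y :: t) := rfl

theorem mem_Gevent_inter_compl_of_forall_lt [Nonempty (Fin d)]
    (h : ∀ x, x ≠ b → T ω a x < T ω b x) : ω ∈ Gevent {a} {b} ∩ (Gevent {b} {a})ᶜ := by
  simp only [Set.mem_inter_iff, Set.mem_compl_iff, Gevent, Set.mem_ofPred_eq, TS_singleton,
    Set.not_infinite]
  exact ⟨(Set.finite_singleton b).infinite_compl.mono h,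
    (Set.finite_singleton b).subset fun x hx => by_contra fun hxb => (h x hxb).not_gt hx⟩

end PassageTime

section TrapEvent

variable {d : ℕ}

instance : Countable (Edge d) := by
  unfold Edge
  infer_instance

def edgesWithin (W : Set (Fin d → ℤ)) : Set (Edge d) :=
  {e | ∀ v ∈ e.val, v ∈ W}

theorem Set.Finite.edgesWithin {W : Set (Fin d → ℤ)} (hW : W.Finite) :
    (edgesWithin W).Finite := by
  refine (((hW.prod hW).image fun p => s(p.1, p.2)).preimage
    Subtype.val_injective.injOn).subset ?_
  rintro ⟨_, x, y, -, rfl⟩ (he : ∀ v ∈ s(x, y), v ∈ W)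
  exact ⟨(x, y), ⟨he x (Sym2.mem_mk_left x y), he y (Sym2.mem_mk_right x y)⟩, rfl⟩

theorem mk_mem_edgesWithin {W : Set (Fin d → ℤ)} {u v : Fin d → ℤ} (h : Adj u v) (hu : u ∈ W)
    (hv : v ∈ W) : (⟨s(u, v), u, v, h, rfl⟩ : Edge d) ∈ edgesWithin W :=
  fun w hw => by rcases Sym2.mem_iff.1 hw with rfl | rfl <;> assumption

def trapEvent (b : Fin d → ℤ) (W : Set (Fin d → ℤ)) (K : ℝ) : Set (Edge d → ℝ) :=
  ⋂ e ∈ edgesWithin W, (fun ω => ω e) ⁻¹' (if b ∈ e.val then Set.Ioi K else Set.Iio 1)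

variable {b u v : Fin d → ℤ} {W : Set (Fin d → ℤ)} {K : ℝ} {ω : Edge d → ℝ}

theorem lt_edgeTime_of_mem_trapEvent (hω : ω ∈ trapEvent b W K) (hb : b ∈ W) (hv : v ∈ W)
    (h : Adj b v) : K < edgeTime ω b v := by
  have := Set.mem_iInter₂.1 hω ⟨s(b, v), b, v, h, rfl⟩ (mk_mem_edgesWithin h hb hv)
  simpa [edgeTime, h] using this

theorem edgeTime_le_one_of_mem_trapEvent (hω : ω ∈ trapEvent b W K) (hu : u ∈ W) (hv : v ∈ W)
    (hub : u ≠ b) (hvb : v ≠ b) : edgeTime ω u v ≤ 1 := by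
  unfold edgeTime
  split_ifs with h
  · have := Set.mem_iInter₂.1 hω ⟨s(u, v), u, v, h, rfl⟩ (mk_mem_edgesWithin h hu hv)
    simp only [Sym2.mem_iff, hub.symm, hvb.symm, or_self, if_false] at this
    exact le_of_lt this
  · exact zero_le_one

theorem T_lt_T_of_mem_trapEvent {a x : Fin d → ℤ} (hω : ∀ e, 0 ≤ ω e)
    (htrap : ω ∈ trapEvent b W K) (hb : b ∈ W)
    (hpaths : ∀ y, Adj b y → ∃ γ, IsPath a y γ ∧ b ∉ γ ∧ (∀ w ∈ γ, w ∈ W) ∧ γ.length + 1 ≤ K)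
    (hx : x ≠ b) : T ω a x < T ω b x := by
  suffices T ω a x + 1 ≤ T ω b x by linarith
  refine T_add_le_T_of_forall_adj hω (fun y hy => ?_) hx
  obtain ⟨γ, hγ, hbγ, hγW, hlen⟩ := hpaths y hy
  have hfast : pathTime ω γ ≤ γ.length := pathTime_le_length fun u hu v hv =>
    edgeTime_le_one_of_mem_trapEvent htrap (hγW u hu) (hγW v hv) (ne_of_mem_of_not_mem hu hbγ)
      (ne_of_mem_of_not_mem hv hbγ)
  have hslow := lt_edgeTime_of_mem_trapEvent htrap hb (hγW y hγ.mem_last) hy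
  exact ⟨γ, hγ, by linarith⟩

end TrapEvent

theorem ProbabilityTheory.iIndepFun.measure_biInter_preimage_pos {Ω ι β : Type*}
    [MeasurableSpace Ω] [MeasurableSpace β] {μ : Measure Ω} {X : ι → Ω → β}
    (hX : iIndepFun X μ) (S : Finset ι) {A : ι → Set β} (hA : ∀ i ∈ S, MeasurableSet (A i))
    (hpos : ∀ i ∈ S, 0 < μ (X i ⁻¹' A i)) : 0 < μ (⋂ i ∈ S, X i ⁻¹' A i) := by
  rw [hX.meas_biInter fun i hi => ⟨A i, hA i hi, rfl⟩]
  exact CanonicallyOrderedAdd.prod_pos.2 hpos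

namespace IIDExp

variable {d : ℕ} {lam : ℝ} {P : Measure (Edge d → ℝ)}

theorem measure_gt_pos (hP : IIDExp lam P) (e : Edge d) {t : ℝ} (ht : 0 ≤ t) :
    0 < P {ω | t < ω e} := by
  change 0 < P {ω | ω e > t}
  rw [hP.2 e t ht]
  exact ENNReal.ofReal_pos.2 (Real.exp_pos _)

theorem measure_lt_pos [IsProbabilityMeasure P] (hP : IIDExp lam P) (hlam : 0 < lam)
    (e : Edge d) {t : ℝ} (ht : 0 < t) : 0 < P {ω | ω e < t} := by
  have htail : P {ω | ω e > t / 2} < 1 := by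
    rw [hP.2 e _ (by positivity)]
    exact ENNReal.ofReal_lt_one.2 (Real.exp_lt_one_iff.2 (neg_neg_of_pos (by positivity)))
  calc 0 < 1 - P {ω | ω e > t / 2} := tsub_pos_of_lt htail
    _ = P {ω | ω e > t / 2}ᶜ :=
      (prob_compl_eq_one_sub (measurableSet_lt measurable_const (measurable_pi_apply e))).symm
    _ ≤ P {ω | ω e < t} := measure_mono fun ω (h : ¬ ω e > t / 2) => by
      change ω e < t
      linarith

theorem ae_nonneg [IsProbabilityMeasure P] (hP : IIDExp lam P) :
    ∀ᵐ ω ∂P, ∀ e : Edge d, 0 ≤ ω e := by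
  refine ae_all_iff.2 fun e => ae_iff.2 (measure_mono_null (t := {ω | ω e > 0}ᶜ)
    (fun ω h h' => h (le_of_lt h')) ?_)
  rw [prob_compl_eq_one_sub (measurableSet_lt measurable_const (measurable_pi_apply e)),
    hP.2 e 0 le_rfl]
  simp

theorem measure_trapEvent_pos [IsProbabilityMeasure P] (hP : IIDExp lam P) (hlam : 0 < lam)
    (b : Fin d → ℤ) {W : Set (Fin d → ℤ)} (hW : W.Finite) {K : ℝ} (hK : 0 ≤ K) :
    0 < P (trapEvent b W K) := by
  have hS := hW.edgesWithin
  have : trapEvent b W K = ⋂ e ∈ hS.toFinset,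
      (fun ω => ω e) ⁻¹' (if b ∈ e.val then Set.Ioi K else Set.Iio 1) := by
    simp only [trapEvent, Set.Finite.mem_toFinset]
  rw [this]
  refine hP.1.measure_biInter_preimage_pos _ (fun e _ => ?_) (fun e _ => ?_)
  · split_ifs
    exacts [measurableSet_Ioi, measurableSet_Iio]
  · split_ifs
    exacts [hP.measure_gt_pos e hK, hP.measure_lt_pos hlam e one_pos]

theorem measure_strangulation_pos [IsProbabilityMeasure P] (hP : IIDExp lam P) (hlam : 0 < lam)
    (hd : 2 ≤ d) {a b : Fin d → ℤ} (hab : a ≠ b) : 0 < P (Gevent {a} {b} ∩ (Gevent {b} {a})ᶜ) := by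
  have hN := finite_setOf_adj b
  choose! γ hγ hbγ using fun y (hy : Adj b y) => joinedAvoiding_of_ne hd hab hy.ne.symm
  set W := insert b (⋃ y ∈ {y | Adj b y}, {w | w ∈ γ y})
  have hW : W.Finite := (hN.biUnion fun y _ => (γ y).finite_toSet).insert b
  set K : ℝ := ∑ y ∈ hN.toFinset, ((γ y).length + 1 : ℝ)
  have hK (y) (hy : Adj b y) : ((γ y).length : ℝ) + 1 ≤ K :=
    Finset.single_le_sum (f := fun y => ((γ y).length + 1 : ℝ)) (fun _ _ => by positivity)
      (hN.mem_toFinset.2 hy)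
  have : Nonempty (Fin d) := ⟨⟨0, by omega⟩⟩
  refine (hP.measure_trapEvent_pos hlam b hW (K := K) (by positivity)).trans_le
    (measure_mono_ae ?_)
  filter_upwards [hP.ae_nonneg] with ω hω htrap
  refine mem_Gevent_inter_compl_of_forall_lt fun x hx =>
    T_lt_T_of_mem_trapEvent hω htrap (Set.mem_insert b _) (fun y hy => ?_) hx
  exact ⟨γ y, hγ y hy, hbγ y hy,
    fun w hw => Set.mem_insert_of_mem _ (Set.mem_biUnion hy hw), hK y hy⟩

end IIDExp

/-- In the symmetric two-type Richardson model on `ℤ^d` (`d ≥ 2`, both rates 1) started from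
`ξ₁ = {0}` and `ξ₂ = {e₁}`, each strangulation outcome has positive probability. -/
theorem strangulation_has_positive_probability (d : ℕ) (hd : 2 ≤ d)
    (P : Measure (Edge d → ℝ)) [IsProbabilityMeasure P] (hP : IIDExp 1 P) :
    0 < P (Gevent {origin d} {e1 d} ∩ (Gevent {e1 d} {origin d})ᶜ) ∧
    0 < P (Gevent {e1 d} {origin d} ∩ (Gevent {origin d} {e1 d})ᶜ) := by
  have h : origin d ≠ e1 d := fun h => by simpa [origin, e1] using congrFun h ⟨0, by omega⟩
  exact ⟨hP.measure_strangulation_pos one_pos hd h, hP.measure_strangulation_pos one_pos hd h.symm⟩
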